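/- arXiv:0812.1039 — 3 statements merged into one kernel-verified Lean document; each statement's English description precedes it below -/
import Mathlib

section
/- Let r ≥ 2 be an integer. A complex (r−1)×(r−1) matrix A satisfies C(p,q)·A = A·C(−q,p) for all integers p, q if and only if A is a scalar multiple of the matrix S = ([jk])_{1≤j,k≤r−1}, whose (j,k) entry is the quantized integer [jk] = sin(jkπ/r)/sin(π/r). In particular, up to multiplication by a nonzero scalar, S is the unique invertible matrix with this property. -/
/-!
With `tsin r n = t^{2n} - t^{-2n} = 2i sin(nπ/r)` we have `[n] = tsin r n / tsin r 1`, and the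
entries of `C(p,q)` and of `S` are restrictions to `1, …, r-1` of `2r`-periodic functions of
integer indices which are odd in each index. So each entry of `C(p,q) S` and of `S C(-q,p)` is
half a sum of an even function over a full period, where `ε(k, ·)` acts as a difference of two
point evaluations; both sides evaluate to the same Laurent polynomial in `t`.

Conversely, `C(1,0)` is the adjacency matrix of the path on `r-1` vertices and `C(0,1)` is
diagonal, and `C(1,0) B = B C(0,1)` says that every column of `B` is an eigenvector of the path.
Such an eigenvector vanishing at the first vertex is zero, by the three-term recurrence along the
path. Applied to `B = A - A₁₁ S` and to `Bᵀ` (which intertwines the same way by the relation for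
`(p,q) = (0,1)`), this gives first that the first row of `B` and then that all of `B` vanishes.
-/

open Complex Matrix

/-- `t = exp(iπ/(2r))`. -/
noncomputable def tconst (r : ℕ) : ℂ := Complex.exp (Real.pi * Complex.I / (2 * r))

/-- `ε(k,j) = 1` if `j ≡ k (mod 2r)`, `−1` if `j ≡ −k (mod 2r)`, `0` otherwise. -/
def eps (r : ℕ) (k j : ℤ) : ℤ :=
  if (2 * (r : ℤ)) ∣ (j - k) then 1 else if (2 * (r : ℤ)) ∣ (j + k) then -1 else 0

/-- The matrix of the Weyl quantization of `2 cos 2π(px+qy)` in the basis `ζ_1, …, ζ_{r−1}`: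
`C(p,q)_{k,m} = t^{−pq} (t^{2qm} ε(k, m−p) + t^{−2qm} ε(k, m+p))`, with indices shifted so that
the index `k : Fin (r-1)` corresponds to `k+1 ∈ {1, …, r−1}`. -/
noncomputable def Cmat (r : ℕ) (p q : ℤ) : Matrix (Fin (r - 1)) (Fin (r - 1)) ℂ :=
  Matrix.of fun k m =>
    tconst r ^ (-(p * q)) *
      (tconst r ^ (2 * q * ((m : ℤ) + 1)) * (eps r ((k : ℤ) + 1) (((m : ℤ) + 1) - p) : ℂ) +
       tconst r ^ (-(2 * q * ((m : ℤ) + 1))) * (eps r ((k : ℤ) + 1) (((m : ℤ) + 1) + p) : ℂ))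

/-- The quantized integer `[n] = sin(nπ/r)/sin(π/r)`. -/
noncomputable def qint (r : ℕ) (n : ℤ) : ℝ :=
  Real.sin (n * Real.pi / r) / Real.sin (Real.pi / r)

/-- The `S`-matrix `S_{j,k} = [jk]`, `1 ≤ j, k ≤ r−1`. -/
noncomputable def Smat (r : ℕ) : Matrix (Fin (r - 1)) (Fin (r - 1)) ℂ :=
  Matrix.of fun j k => (qint r (((j : ℤ) + 1) * ((k : ℤ) + 1)) : ℂ)


open Finset Function

section

variable {r : ℕ}

theorem tconst_ne_zero (r : ℕ) : tconst r ≠ 0 := Complex.exp_ne_zero _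

theorem tconst_zpow (r : ℕ) (n : ℤ) : tconst r ^ n = exp (n * (Real.pi * I / (2 * r))) := by
  rw [tconst, exp_int_mul]

theorem tconst_zpow_antiperiodic (hr : r ≠ 0) :
    Antiperiodic (fun n : ℤ => tconst r ^ n) (2 * r) := by
  intro n
  have hr' : (r : ℂ) ≠ 0 := Nat.cast_ne_zero.mpr hr
  simp only [tconst_zpow, Int.cast_add, Int.cast_mul, Int.cast_ofNat, Int.cast_natCast]
  rw [show ((n : ℂ) + 2 * r) * (Real.pi * I / (2 * r)) =
      n * (Real.pi * I / (2 * r)) + Real.pi * I by field_simp,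
    exp_add, exp_pi_mul_I, mul_neg_one]

theorem tconst_zpow_add_mul (hr : r ≠ 0) (a c : ℤ) :
    tconst r ^ (a + c * (4 * r)) = tconst r ^ a := by
  have hper : Periodic (fun n : ℤ => tconst r ^ n) (4 * r) := by
    simpa [← mul_assoc] using (tconst_zpow_antiperiodic hr).periodic_two_mul
  simpa using hper.int_mul c a

noncomputable def tsin (r : ℕ) (n : ℤ) : ℂ := tconst r ^ (2 * n) - tconst r ^ (-(2 * n))

theorem tsin_zero (r : ℕ) : tsin r 0 = 0 := by simp [tsin]

theorem tsin_neg (r : ℕ) (n : ℤ) : tsin r (-n) = -tsin r n := by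
  simp only [tsin, mul_neg, neg_neg, neg_sub]

theorem tsin_antiperiodic (hr : r ≠ 0) : Antiperiodic (tsin r) r := by
  intro n
  have h := tconst_zpow_antiperiodic hr
  simp only [tsin, show 2 * (n + r) = 2 * n + 2 * r by ring,
    show -(2 * n + 2 * r) = -(2 * n) - 2 * r by ring, h _, h.sub_eq]
  ring

theorem tsin_add_mul (hr : r ≠ 0) (a c : ℤ) : tsin r (a + c * (2 * r)) = tsin r a := by
  simpa using (tsin_antiperiodic hr).periodic_two_mul.int_mul c a

theorem tsin_eq_zero_of_dvd (hr : r ≠ 0) {n : ℤ} (h : (r : ℤ) ∣ n) : tsin r n = 0 := by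
  obtain ⟨c, rfl⟩ := h
  simpa [mul_comm] using (tsin_antiperiodic hr).int_mul_eq_of_eq_zero (tsin_zero r) c

theorem tsin_eq_two_mul_I_mul_sin (r : ℕ) (n : ℤ) :
    tsin r n = 2 * I * Complex.sin (n * Real.pi / r) := by
  have hx (s : ℤ) :
      ((s * (2 * n) : ℤ) : ℂ) * (Real.pi * I / (2 * r)) = s * (n * Real.pi / r * I) := by
    push_cast
    ring
  rw [tsin, tconst_zpow, tconst_zpow, mul_right_comm, two_sin, ← one_mul (2 * n), ← neg_mul,
    hx, hx]
  push_cast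
  ring_nf
  rw [I_sq]
  ring

theorem qint_eq_tsin_div (r : ℕ) (n : ℤ) : (qint r n : ℂ) = tsin r n / tsin r 1 := by
  have h1 := tsin_eq_two_mul_I_mul_sin r 1
  push_cast at h1
  rw [qint, tsin_eq_two_mul_I_mul_sin, h1, mul_div_mul_left _ _ (by simp)]
  push_cast
  ring_nf

theorem qint_one (hr : 2 ≤ r) : qint r 1 = 1 := by
  have hr' : (1 : ℝ) < r := by exact_mod_cast hr
  rw [qint, Int.cast_one, one_mul]
  refine div_self (Real.sin_pos_of_pos_of_lt_pi (by positivity) ?_).ne'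
  simpa using div_lt_self Real.pi_pos hr'

theorem eps_comm (r : ℕ) (k j : ℤ) : eps r k j = eps r j k := by
  simp only [eps, ← dvd_neg (b := j - k), neg_sub, add_comm j k]

theorem eps_periodic (r : ℕ) (k : ℤ) : Periodic (eps r k) (2 * r) := by
  intro j
  simp only [eps, show j + 2 * r - k = j - k + 2 * r by ring,
    show j + 2 * r + k = j + k + 2 * r by ring, dvd_add_self_right]

theorem eps_neg_left (r : ℕ) (k j : ℤ) : eps r (-k) j = eps r k (-j) := by
  simp only [eps, sub_neg_eq_add, ← sub_eq_add_neg, show -j - k = -(j + k) by ring,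
    show -j + k = -(j - k) by ring, dvd_neg]

theorem not_dvd_sub_and_dvd_add {k : ℤ} (hk : ¬ 2 * (r : ℤ) ∣ 2 * k) (j : ℤ) :
    ¬ (2 * (r : ℤ) ∣ j - k ∧ 2 * (r : ℤ) ∣ j + k) := fun ⟨hsub, hadd⟩ =>
  hk (by simpa [show j + k - (j - k) = 2 * k by ring] using dvd_sub hadd hsub)

theorem eps_neg_right {k : ℤ} (hk : ¬ 2 * (r : ℤ) ∣ 2 * k) (j : ℤ) :
    eps r k (-j) = -eps r k j := by
  have := not_dvd_sub_and_dvd_add hk j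
  simp only [eps, show -j - k = -(j + k) by ring, show -j + k = -(j - k) by ring, dvd_neg]
  split_ifs <;> tauto

theorem cast_eps {k : ℤ} (hk : ¬ 2 * (r : ℤ) ∣ 2 * k) (j : ℤ) :
    (eps r k j : ℂ) =
      (if 2 * (r : ℤ) ∣ j - k then 1 else 0) - (if 2 * (r : ℤ) ∣ j + k then 1 else 0) := by
  have := not_dvd_sub_and_dvd_add hk j
  simp only [eps]
  split_ifs <;> first | tauto | simp

theorem eps_of_nonneg_of_le {k j : ℤ} (hk : 0 < k) (hkr : k < r) (hj : 0 ≤ j) (hjr : j ≤ r) :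
    eps r k j = if j = k then 1 else 0 := by
  have hsub : 2 * (r : ℤ) ∣ j - k ↔ j = k := by
    refine ⟨fun h => ?_, fun h => by simp [h]⟩
    linarith [Int.eq_zero_of_abs_lt_dvd h (abs_lt.mpr ⟨by omega, by omega⟩)]
  have hadd : ¬ 2 * (r : ℤ) ∣ j + k := by
    rintro ⟨c, hc⟩
    rcases lt_trichotomy c 1 with h | h | h <;> nlinarith
  simp only [eps, hsub, hadd, if_false]

theorem sum_range_ite_dvd_sub {M : Type*} [AddCommMonoid M] {n : ℕ} (hn : n ≠ 0) {g : ℤ → M}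
    (hg : Periodic g n) (a : ℤ) :
    ∑ m ∈ range n, (if (n : ℤ) ∣ m - a then g m else 0) = g a := by
  have hn' : (0 : ℤ) < n := by omega
  have hmod : 0 ≤ a % n := Int.emod_nonneg _ hn'.ne'
  have hlt : a % n < n := Int.emod_lt_of_pos _ hn'
  have hiff : ∀ m ∈ range n, ((n : ℤ) ∣ m - a ↔ (a % n).toNat = m) := by
    intro m hm
    rw [mem_range] at hm
    rw [← Int.modEq_iff_dvd, Int.ModEq, Int.emod_eq_of_lt (a := m) (by omega) (by omega)]
    omega
  rw [sum_congr rfl fun m hm => if_congr (hiff m hm) rfl rfl, sum_ite_eq,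
    if_pos (mem_range.mpr (by omega)), Int.toNat_of_nonneg hmod, Int.emod_def]
  simpa [mul_comm] using hg.sub_int_mul_eq (a / n) (x := a)

theorem sum_range_two_mul_of_even {M : Type*} [AddCommMonoid M] (hr : r ≠ 0) {g : ℤ → M}
    (hg : Periodic g (2 * r)) (heven : ∀ x, g (-x) = g x) :
    ∑ m ∈ range (2 * r), g m = g 0 + g r + 2 • ∑ m ∈ range (r - 1), g (m + 1) := by
  obtain ⟨s, rfl⟩ := Nat.exists_eq_succ_of_ne_zero hr
  have hreflect :
      ∑ x ∈ range s, g ((s + 1 + (x + 1) : ℕ) : ℤ) = ∑ x ∈ range s, g (x + 1) := by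
    rw [← sum_range_reflect (fun j : ℕ => g (j + 1)) s]
    refine sum_congr rfl fun x hx => ?_
    have hx : x < s := mem_range.mp hx
    have hcast : ((s + 1 + (x + 1) : ℕ) : ℤ) =
        -(((s - 1 - x : ℕ) : ℤ) + 1) + 2 * (s + 1 : ℕ) := by
      push_cast [Nat.sub_sub, Nat.cast_sub (by omega : 1 + x ≤ s)]
      ring
    rw [hcast, hg, heven]
  rw [show 2 * (s + 1) = (s + 1) + (s + 1) by ring, sum_range_add, sum_range_succ',
    sum_range_succ' (fun x => g ((s + 1 + x : ℕ) : ℤ)), hreflect, Nat.succ_sub_one, two_nsmul]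
  push_cast
  abel

theorem eq_zero_of_odd_of_dvd {g : ℤ → ℂ} (hg : Periodic g (2 * r))
    (hodd : ∀ x, g (-x) = -g x) {m : ℤ} (hm : 2 * (r : ℤ) ∣ 2 * m) : g m = 0 := by
  obtain ⟨c, hc⟩ := hm
  have h := hg.int_mul c (-m)
  rw [Int.cast_id, show -m + c * (2 * r) = m by linarith, hodd] at h
  exact self_eq_neg.mp h

theorem sum_range_eps_sub_mul (hr : r ≠ 0) {k : ℤ} (hk : ¬ 2 * (r : ℤ) ∣ 2 * k)
    {g : ℤ → ℂ} (hg : Periodic g (2 * r)) (a : ℤ) :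
    ∑ m ∈ range (2 * r), (eps r k (m - a) : ℂ) * g m = g (a + k) - g (a - k) := by
  have hdelta := sum_range_ite_dvd_sub (n := 2 * r) (by omega) (by exact_mod_cast hg)
  push_cast at hdelta
  simp only [cast_eps hk, sub_mul, ite_mul, one_mul, zero_mul, sum_sub_distrib, sub_sub, sub_add,
    hdelta]

theorem sum_range_eps_mul_of_odd (hr : r ≠ 0) {g : ℤ → ℂ} (hg : Periodic g (2 * r))
    (hodd : ∀ x, g (-x) = -g x) (j : ℤ) :
    ∑ m ∈ range (2 * r), (eps r j m : ℂ) * g m = 2 * g j := by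
  by_cases hj : 2 * (r : ℤ) ∣ 2 * j
  · rw [eq_zero_of_odd_of_dvd hg hodd hj, mul_zero]
    refine sum_eq_zero fun m _ => ?_
    simp only [eps]
    split_ifs with hsub hadd
    · rw [eq_zero_of_odd_of_dvd hg hodd (by
        simpa [show 2 * (m : ℤ) = 2 * (m - j) + 2 * j by ring] using
          dvd_add (dvd_mul_of_dvd_right hsub 2) hj), mul_zero]
    · rw [eq_zero_of_odd_of_dvd hg hodd (by
        simpa [show 2 * (m : ℤ) = 2 * (m + j) - 2 * j by ring] using
          dvd_sub (dvd_mul_of_dvd_right hadd 2) hj), mul_zero]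
    · simp
  · simpa [hodd, two_mul, sub_eq_add_neg] using sum_range_eps_sub_mul hr hj hg 0

/-- The paper's `C(p,q)_{k,x}` for arbitrary integer indices `k, x`. -/
noncomputable def Centry (r : ℕ) (p q k x : ℤ) : ℂ :=
  tconst r ^ (-(p * q)) *
    (tconst r ^ (2 * q * x) * eps r k (x - p) + tconst r ^ (-(2 * q * x)) * eps r k (x + p))

theorem Cmat_apply (r : ℕ) (p q : ℤ) (k m : Fin (r - 1)) :
    Cmat r p q k m = Centry r p q (k + 1) (m + 1) := rfl

theorem Centry_periodic (hr : r ≠ 0) (p q k : ℤ) : Periodic (Centry r p q k) (2 * r) := by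
  intro x
  simp only [Centry, show 2 * q * (x + 2 * r) = 2 * q * x + q * (4 * r) by ring,
    show -(2 * q * x + q * (4 * r)) = -(2 * q * x) + -q * (4 * r) by ring,
    show x + 2 * r - p = x - p + 2 * r by ring, show x + 2 * r + p = x + p + 2 * r by ring,
    tconst_zpow_add_mul hr, eps_periodic r k _]

theorem Centry_periodic_left (p q x : ℤ) : Periodic (fun k => Centry r p q k x) (2 * r) := by
  intro k
  simp only [Centry, eps_comm r (k + 2 * r), eps_periodic r _ k, eps_comm r k]

theorem Centry_neg_right {k : ℤ} (hk : ¬ 2 * (r : ℤ) ∣ 2 * k) (p q x : ℤ) :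
    Centry r p q k (-x) = -Centry r p q k x := by
  simp only [Centry, show -x - p = -(x + p) by ring, show -x + p = -(x - p) by ring,
    eps_neg_right hk, mul_neg, neg_neg]
  push_cast
  ring

theorem Centry_neg_left {k : ℤ} (hk : ¬ 2 * (r : ℤ) ∣ 2 * k) (p q x : ℤ) :
    Centry r p q (-k) x = -Centry r p q k x := by
  simp only [Centry, eps_neg_left, eps_neg_right hk]
  push_cast
  ring

theorem sum_range_Centry_mul_tsin (hr : r ≠ 0) (p q : ℤ) {K : ℤ}
    (hK : ¬ 2 * (r : ℤ) ∣ 2 * K) (L : ℤ) :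
    ∑ x ∈ range (2 * r), Centry r p q K x * tsin r (x * L) =
      2 * tconst r ^ (p * q) * (tconst r ^ (2 * p * L) * tsin r (K * (L + q)) +
        tconst r ^ (-(2 * p * L)) * tsin r (K * (L - q))) := by
  set gp : ℤ → ℂ := fun x => tconst r ^ (2 * q * x) * tsin r (x * L)
  set gm : ℤ → ℂ := fun x => tconst r ^ (-(2 * q * x)) * tsin r (x * L)
  have hper (s : ℤ) :
      Periodic (fun x : ℤ => tconst r ^ (s * (2 * q * x)) * tsin r (x * L)) (2 * r) := fun x => by
    simp only [show s * (2 * q * (x + 2 * r)) = s * (2 * q * x) + s * q * (4 * r) by ring,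
      show (x + 2 * r) * L = x * L + L * (2 * r) by ring, tconst_zpow_add_mul hr,
      tsin_add_mul hr]
  have hsplit (x : ℤ) : Centry r p q K x * tsin r (x * L) =
      tconst r ^ (-(p * q)) *
        ((eps r K (x - p) : ℂ) * gp x + (eps r K (x - -p) : ℂ) * gm x) := by
    simp only [Centry, gp, gm, sub_neg_eq_add]
    ring
  rw [sum_congr rfl fun (x : ℕ) _ => hsplit x, ← mul_sum, sum_add_distrib,
    sum_range_eps_sub_mul hr hK (by simpa only [one_mul] using hper 1) p,
    sum_range_eps_sub_mul hr hK (by simpa only [neg_one_mul] using hper (-1)) (-p)]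
  simp only [gp, gm, tsin, mul_sub, sub_mul, mul_add, add_mul, mul_assoc,
    ← zpow_add₀ (tconst_ne_zero r)]
  ring_nf

theorem sum_range_tsin_mul_Centry (hr : r ≠ 0) (p q K L : ℤ) :
    ∑ x ∈ range (2 * r), tsin r (K * x) * Centry r (-q) p x L =
      2 * tconst r ^ (p * q) * (tconst r ^ (2 * p * L) * tsin r (K * (L + q)) +
        tconst r ^ (-(2 * p * L)) * tsin r (K * (L - q))) := by
  have hper : Periodic (fun x => tsin r (K * x)) (2 * r) := fun x => by
    simp only [mul_add, tsin_add_mul hr]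
  have hodd (x : ℤ) : tsin r (K * -x) = -tsin r (K * x) := by rw [mul_neg, tsin_neg]
  have hsplit (x : ℤ) : tsin r (K * x) * Centry r (-q) p x L =
      tconst r ^ (p * q) * (tconst r ^ (2 * p * L) * ((eps r (L + q) x : ℂ) * tsin r (K * x)) +
        tconst r ^ (-(2 * p * L)) * ((eps r (L - q) x : ℂ) * tsin r (K * x))) := by
    simp only [Centry, eps_comm r x, sub_neg_eq_add, ← sub_eq_add_neg, neg_mul, neg_neg,
      mul_comm q p]
    ring
  rw [sum_congr rfl fun (x : ℕ) _ => hsplit x, ← mul_sum, sum_add_distrib, ← mul_sum,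
    ← mul_sum, sum_range_eps_mul_of_odd hr hper hodd, sum_range_eps_mul_of_odd hr hper hodd]
  ring

theorem sum_Centry_mul_tsin_eq {K L : ℤ} (hK : 0 < K) (hKr : K < r) (hL : 0 < L) (hLr : L < r)
    (p q : ℤ) :
    ∑ m ∈ range (r - 1), Centry r p q K (m + 1) * tsin r ((m + 1) * L) =
      ∑ m ∈ range (r - 1), tsin r (K * (m + 1)) * Centry r (-q) p (m + 1) L := by
  have hr : r ≠ 0 := by omega
  have hK2 : ¬ 2 * (r : ℤ) ∣ 2 * K := fun h => by linarith [Int.le_of_dvd (by omega) h]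
  have hF := sum_range_two_mul_of_even hr (g := fun x => Centry r p q K x * tsin r (x * L))
    (fun x => by
      simp only [Centry_periodic hr p q K x, add_mul, mul_comm (2 * (r : ℤ)) L, tsin_add_mul hr])
    (fun x => by simp only [Centry_neg_right hK2, neg_mul, tsin_neg, mul_neg, neg_neg])
  have hG := sum_range_two_mul_of_even hr (g := fun x => tsin r (K * x) * Centry r (-q) p x L)
    (fun x => by simp only [Centry_periodic_left (-q) p L x, mul_add, tsin_add_mul hr])
    (fun x => by
      by_cases hx : 2 * (r : ℤ) ∣ 2 * x
      · have hrx : (r : ℤ) ∣ x := by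
          obtain ⟨c, hc⟩ := hx
          exact ⟨c, by linarith⟩
        simp only [tsin_eq_zero_of_dvd hr (dvd_mul_of_dvd_right hrx K),
          tsin_eq_zero_of_dvd hr (dvd_mul_of_dvd_right (dvd_neg.mpr hrx) K), zero_mul]
      · simp only [Centry_neg_left hx, mul_neg, tsin_neg, neg_mul, neg_neg])
  have hFG := hF.symm.trans <| (sum_range_Centry_mul_tsin hr p q hK2 L).trans <|
    (sum_range_tsin_mul_Centry hr p q K L).symm.trans hG
  simpa [tsin_zero, tsin_eq_zero_of_dvd hr (dvd_mul_right (r : ℤ) L),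
    tsin_eq_zero_of_dvd hr (dvd_mul_left (r : ℤ) K)] using hFG

theorem Cmat_mul_Smat (r : ℕ) (p q : ℤ) : Cmat r p q * Smat r = Smat r * Cmat r (-q) p := by
  ext k l
  have hk := k.isLt
  have hl := l.isLt
  simp only [mul_apply, Cmat_apply, Smat, of_apply, qint_eq_tsin_div, mul_div_assoc',
    div_mul_eq_mul_div, ← sum_div]
  congr 1
  rw [Fin.sum_univ_eq_sum_range
      (fun m => Centry r p q (k + 1) (m + 1) * tsin r ((m + 1) * (l + 1))),
    Fin.sum_univ_eq_sum_range
      (fun m => tsin r ((k + 1) * (m + 1)) * Centry r (-q) p (m + 1) (l + 1))]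
  exact sum_Centry_mul_tsin_eq (by omega) (by omega) (by omega) (by omega) p q

instance SimpleGraph.decidableRelPathGraphAdj (n : ℕ) : DecidableRel (pathGraph n).Adj :=
  fun _ _ => decidable_of_iff' _ pathGraph_adj

theorem SimpleGraph.eq_zero_of_pathGraph_mulVec_eq_smul {R : Type*} [NonAssocSemiring R]
    {n : ℕ} {v : Fin n → R} {μ : R} (hv : (pathGraph n).adjMatrix R *ᵥ v = μ • v)
    (h0 : ∀ i : Fin n, (i : ℕ) = 0 → v i = 0) : v = 0 := by
  suffices ∀ k : ℕ, ∀ i : Fin n, (i : ℕ) ≤ k → v i = 0 from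
    funext fun i => this i i le_rfl
  intro k
  induction k with
  | zero => exact fun i hi => h0 i (by omega)
  | succ k ih =>
    intro i hi
    by_cases hik : (i : ℕ) ≤ k
    · exact ih i hik
    -- Row `k` of the eigenvalue equation reads `v (k - 1) + v (k + 1) = μ * v k`,
    -- and `v` already vanishes up to `k`.
    have hrow := congrFun hv ⟨k, by omega⟩
    rw [mulVec, dotProduct, sum_eq_single i, Pi.smul_apply, ih ⟨k, by omega⟩ le_rfl, smul_zero,
      adjMatrix_apply, if_pos (pathGraph_adj.mpr (Or.inl (by simp only; omega))), one_mul]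
      at hrow
    · exact hrow
    · intro j _ hji
      rw [adjMatrix_apply]
      split_ifs with hadj
      · rw [pathGraph_adj] at hadj
        rw [ih j (by simp only at hadj; omega), mul_zero]
      · rw [zero_mul]
    · simp

theorem SimpleGraph.apply_eq_zero_of_pathGraph_mul_eq_mul_diagonal {R : Type*}
    [CommSemiring R] {n : ℕ} {B : Matrix (Fin n) (Fin n) R} {d : Fin n → R}
    (hB : (pathGraph n).adjMatrix R * B = B * diagonal d) (j : Fin n)
    (h0 : ∀ i : Fin n, (i : ℕ) = 0 → B i j = 0) (i : Fin n) : B i j = 0 := by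
  have hcol : (pathGraph n).adjMatrix R *ᵥ (fun i => B i j) = d j • fun i => B i j :=
    funext fun i => by simpa [mul_comm] using congrFun (congrFun hB i) j
  exact congrFun (eq_zero_of_pathGraph_mulVec_eq_smul hcol h0) i

theorem Cmat_neg_zero (r : ℕ) (p : ℤ) : Cmat r (-p) 0 = Cmat r p 0 := by
  ext k m
  simp only [Cmat_apply, Centry, mul_zero, zero_mul, neg_zero, zpow_zero, one_mul,
    sub_neg_eq_add, ← sub_eq_add_neg]
  exact add_comm _ _

theorem Cmat_one_zero (r : ℕ) : Cmat r 1 0 = (SimpleGraph.pathGraph (r - 1)).adjMatrix ℂ := by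
  ext k m
  have hk := k.isLt
  have hm := m.isLt
  rw [Cmat_apply, SimpleGraph.adjMatrix_apply]
  simp only [SimpleGraph.pathGraph_adj, Centry, mul_zero, zero_mul, neg_zero, zpow_zero, one_mul]
  rw [eps_of_nonneg_of_le (j := (m : ℤ) + 1 - 1) (by omega) (by omega) (by omega) (by omega),
    eps_of_nonneg_of_le (j := (m : ℤ) + 1 + 1) (by omega) (by omega) (by omega) (by omega)]
  split_ifs <;> first | omega | norm_num

theorem Cmat_zero_one (r : ℕ) : Cmat r 0 1 = diagonal fun m : Fin (r - 1) =>
    tconst r ^ (2 * ((m : ℤ) + 1)) + tconst r ^ (-(2 * ((m : ℤ) + 1))) := by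
  ext k m
  have hk := k.isLt
  have hm := m.isLt
  rw [Cmat_apply, diagonal_apply]
  simp only [Centry, neg_zero, zpow_zero, one_mul, mul_one, sub_zero, add_zero]
  rw [eps_of_nonneg_of_le (j := (m : ℤ) + 1) (by omega) (by omega) (by omega) (by omega)]
  by_cases hkm : k = m
  · subst hkm
    simp
  · rw [if_neg fun h => hkm (Fin.ext (by omega)), if_neg hkm]
    simp

theorem eq_smul_Smat_of_intertwines (hr : 2 ≤ r) {A : Matrix (Fin (r - 1)) (Fin (r - 1)) ℂ}
    (h₁ : Cmat r 1 0 * A = A * Cmat r 0 1) (h₂ : Cmat r 0 1 * A = A * Cmat r 1 0) :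
    A = A ⟨0, by omega⟩ ⟨0, by omega⟩ • Smat r := by
  set i₀ : Fin (r - 1) := ⟨0, by omega⟩
  set B := A - A i₀ i₀ • Smat r
  have hB₁ : Cmat r 1 0 * B = B * Cmat r 0 1 := by
    rw [mul_sub, sub_mul, h₁, Matrix.mul_smul, Matrix.smul_mul, Cmat_mul_Smat, neg_zero]
  have hB₂ : Cmat r 0 1 * B = B * Cmat r 1 0 := by
    rw [mul_sub, sub_mul, h₂, Matrix.mul_smul, Matrix.smul_mul, Cmat_mul_Smat, Cmat_neg_zero]
  rw [Cmat_one_zero, Cmat_zero_one] at hB₁ hB₂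
  have hB₂' := congrArg transpose hB₂
  rw [transpose_mul, transpose_mul, diagonal_transpose, SimpleGraph.transpose_adjMatrix] at hB₂'
  have hrow (m : Fin (r - 1)) : B i₀ m = 0 :=
    SimpleGraph.apply_eq_zero_of_pathGraph_mul_eq_mul_diagonal hB₂'.symm i₀
      (fun i hi => by rw [show i = i₀ from Fin.ext hi]; simp [B, Smat, qint_one hr]) m
  have hB : B = 0 := by
    ext k m
    exact SimpleGraph.apply_eq_zero_of_pathGraph_mul_eq_mul_diagonal hB₁ m
      (fun i hi => by rw [show i = i₀ from Fin.ext hi, hrow]) k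
  exact sub_eq_zero.mp hB

end

/-- A complex `(r−1)×(r−1)` matrix `A` satisfies `C(p,q)·A = A·C(−q,p)` for all integers `p, q`
if and only if `A` is a scalar multiple of the matrix `S = ([jk])_{1≤j,k≤r−1}`. -/
theorem weyl_S_matrix_unique (r : ℕ) (hr : 2 ≤ r)
    (A : Matrix (Fin (r - 1)) (Fin (r - 1)) ℂ) :
    (∀ p q : ℤ, Cmat r p q * A = A * Cmat r (-q) p) ↔ ∃ c : ℂ, A = c • Smat r := by
  constructor
  · intro h
    exact ⟨_, eq_smul_Smat_of_intertwines hr (by simpa using h 1 0)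
      (by simpa [Cmat_neg_zero] using h 0 1)⟩
  · rintro ⟨c, rfl⟩ p q
    rw [Matrix.mul_smul, Matrix.smul_mul, Cmat_mul_Smat]
end

section
/- Let r ≥ 2 be an integer, and let n ≥ 0 and p, q be integers. Then C(np, nq) = T_n(C(p,q)), where T_n is the normalized Chebyshev polynomial of the first kind of degree n evaluated on the matrix C(p,q). -/
open Complex Matrix

/-- Normalized Chebyshev polynomials of the first kind: `T_0 = 2`, `T_1 = X`,
`T_{n+1} = X·T_n − T_{n−1}`. -/
noncomputable def chebT : ℕ → Polynomial ℂ
  | 0 => 2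
  | 1 => Polynomial.X
  | (n + 2) => Polynomial.X * chebT (n + 1) - chebT n

/-!
`C(p,q)` is the compression to the odd functions on `ℤ/2r` of `F(p,q) = D(p,q) + D(-p,-q)`,
where the Weyl operator `D(p,q)` shifts by `p` and multiplies by the character `y ↦ t^{2qy}`,
normalised by `t^{-pq}`. The Weyl relation `D(p,q) D(p',q') = t^{pq'-p'q} D(p+p',q+q')` gives
`F(p,q) F(p',q') = t^{pq'-p'q} F(p+p',q+q') + t^{p'q-pq'} F(p-p',q-q')`. As `F` commutes with the
reflection `y ↦ -y`, this formula descends to `C` (a product of two odd functions, summed over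
`ℤ/2r`, is twice its sum over `1, …, r-1`). For `(p',q') = (np,nq)` the phases are `1`, so with
`C(0,0) = 2` and `C(-p,-q) = C(p,q)` the matrices `C(np,nq)` satisfy the Chebyshev recurrence.
-/

variable {r : ℕ}

lemma sum_range_natCast_zmod {M : Type*} [AddCommMonoid M] (n : ℕ) [NeZero n] (f : ZMod n → M) :
    ∑ i ∈ Finset.range n, f i = ∑ y, f y :=
  Finset.sum_nbij' (fun i : ℕ => (i : ZMod n)) ZMod.val (by simp) (by simp [ZMod.val_lt])
    (fun _ hi => ZMod.val_cast_of_lt (Finset.mem_range.mp hi)) (fun y _ => ZMod.natCast_zmod_val y)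
    (fun _ _ => rfl)

lemma neg_natCast_self_zmod_two_mul (n : ℕ) : -(n : ZMod (2 * n)) = n := by
  rw [neg_eq_iff_add_eq_zero, ← Nat.cast_add, ← two_mul, ZMod.natCast_self]

variable (r) in
def posIdx (m : Fin (r - 1)) : ZMod (2 * r) := ((m : ℕ) : ZMod (2 * r)) + 1

lemma neg_posIdx_ne_posIdx (k m : Fin (r - 1)) : -posIdx r k ≠ posIdx r m := by
  have hk := k.isLt
  have hm := m.isLt
  rw [Ne, neg_eq_iff_add_eq_zero, posIdx, posIdx, ← Nat.cast_succ, ← Nat.cast_succ, ← Nat.cast_add,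
    ZMod.natCast_eq_zero_iff]
  intro h
  have := Nat.eq_zero_of_dvd_of_lt h (by omega)
  omega

lemma posIdx_injective : Function.Injective (posIdx r) := by
  intro k m h
  rw [posIdx, posIdx, add_left_inj, ZMod.natCast_eq_natCast_iff',
    Nat.mod_eq_of_lt (by omega : (k : ℕ) < 2 * r), Nat.mod_eq_of_lt (by omega : (m : ℕ) < 2 * r)] at h
  exact Fin.ext h

lemma eps_eq_ite_sub_ite {k : ℤ} (hk : -(k : ZMod (2 * r)) ≠ k) (j : ℤ) :
    (eps r k j : ℂ) =
      (if (j : ZMod (2 * r)) = k then 1 else 0) - (if (j : ZMod (2 * r)) = -k then 1 else 0) := by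
  have hsub : (2 * (r : ℤ)) ∣ j - k ↔ (j : ZMod (2 * r)) = k := by
    rw [eq_comm, ZMod.intCast_eq_intCast_iff_dvd_sub]
    push_cast
    rfl
  have hadd : (2 * (r : ℤ)) ∣ j + k ↔ (j : ZMod (2 * r)) = -k := by
    rw [eq_comm, ← Int.cast_neg, ZMod.intCast_eq_intCast_iff_dvd_sub, sub_neg_eq_add]
    push_cast
    rfl
  simp only [eps, hsub, hadd]
  split_ifs with h1 h2 h2
  · exact absurd (h2.symm.trans h1) hk
  all_goals simp

section

variable [NeZero r]

lemma sum_zmod_eq_of_even {M : Type*} [AddCommMonoid M] (f : ZMod (2 * r) → M)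
    (hf : ∀ y, f (-y) = f y) :
    ∑ y, f y = f 0 + f r + 2 • ∑ m : Fin (r - 1), f (posIdx r m) := by
  obtain ⟨s, rfl⟩ : ∃ s, r = s + 1 := Nat.exists_eq_add_one.mpr (NeZero.pos r)
  have hreflect : ∑ j ∈ Finset.range s, f ((1 + s + 1 + j : ℕ) : ZMod (2 * (s + 1))) =
      ∑ j ∈ Finset.range s, f ((j : ℕ) + 1) := by
    rw [← Finset.sum_range_reflect (fun j : ℕ => f ((j : ZMod (2 * (s + 1))) + 1))]
    refine Finset.sum_congr rfl fun j hj => ?_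
    have hj := Finset.mem_range.mp hj
    rw [← hf]
    congr 1
    rw [neg_eq_iff_add_eq_zero, ← Nat.cast_succ, ← Nat.cast_add,
      show 1 + s + 1 + j + (s - 1 - j + 1) = 2 * (s + 1) by omega, ZMod.natCast_self]
  rw [← sum_range_natCast_zmod,
    show Finset.range (2 * (s + 1)) = Finset.range (1 + s + 1 + s) by congr 1; ring,
    Finset.sum_range_add, Finset.sum_range_succ, Finset.sum_range_add, hreflect,
    Finset.sum_range_one, Nat.cast_zero, two_nsmul, add_comm 1 s]
  simp only [posIdx, Fin.sum_univ_eq_sum_range (fun i : ℕ => f ((i : ZMod (2 * (s + 1))) + 1)),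
    Nat.add_sub_cancel, Nat.cast_add (1 : ℕ), Nat.cast_one, add_comm (1 : ZMod (2 * (s + 1)))]
  abel

lemma submatrix_posIdx_mul {R : Type*} [Ring R] [NoZeroDivisors R] [CharZero R]
    (A B : Matrix (ZMod (2 * r)) (ZMod (2 * r)) R)
    (hA : ∀ x y, A x (-y) = -A x y) (hB : ∀ y z, B (-y) z = -B y z) :
    (A * B).submatrix (posIdx r) (posIdx r) =
      2 • (A.submatrix (posIdx r) (posIdx r) * B.submatrix (posIdx r) (posIdx r)) := by
  ext k m
  have h0 : A (posIdx r k) 0 = 0 := by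
    simpa [CharZero.eq_neg_self_iff] using hA (posIdx r k) 0
  have hmid : A (posIdx r k) r = 0 := by
    simpa [neg_natCast_self_zmod_two_mul r, CharZero.eq_neg_self_iff] using hA (posIdx r k) r
  rw [submatrix_apply, mul_apply, sum_zmod_eq_of_even _ fun y => by rw [hA, hB, neg_mul_neg], h0,
    hmid]
  simp [mul_apply]

lemma stdAddChar_intCast_eq_tconst_zpow (a : ℤ) :
    ZMod.stdAddChar (a : ZMod (2 * r)) = tconst r ^ (2 * a) := by
  have hr : (r : ℂ) ≠ 0 := NeZero.ne _
  rw [ZMod.stdAddChar_coe, tconst, ← Complex.exp_int_mul]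
  congr 1
  push_cast
  field_simp

variable (r) in
noncomputable def weylMat (p q : ℤ) : Matrix (ZMod (2 * r)) (ZMod (2 * r)) ℂ :=
  of fun x y =>
    if y = x + p then tconst r ^ (-(p * q)) * ZMod.stdAddChar ((q : ZMod (2 * r)) * y) else 0

lemma weylMat_apply (p q : ℤ) (x y : ZMod (2 * r)) :
    weylMat r p q x y =
      if y - p = x then tconst r ^ (-(p * q)) * ZMod.stdAddChar ((q : ZMod (2 * r)) * y) else 0 := by
  simp only [weylMat, of_apply, sub_eq_iff_eq_add]

lemma weylMat_zero : weylMat r 0 0 = 1 := by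
  ext x y
  simp [weylMat, one_apply, eq_comm]

lemma weylMat_mul_weylMat (p q p' q' : ℤ) :
    weylMat r p q * weylMat r p' q' =
      tconst r ^ (p * q' - p' * q) • weylMat r (p + p') (q + q') := by
  have ht : tconst r ≠ 0 := Complex.exp_ne_zero _
  ext x z
  rw [mul_apply, Finset.sum_eq_single (x + (p : ZMod (2 * r))) (fun y _ hy => by simp [weylMat, hy])
    (by simp)]
  simp only [weylMat, of_apply, if_true, Matrix.smul_apply, smul_eq_mul, Int.cast_add, ← add_assoc]
  split_ifs with hz
  · have hy : x + (p : ZMod (2 * r)) = z - p' := by rw [hz]; ring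
    rw [hy, mul_sub, AddChar.map_sub_eq_div, ← Int.cast_mul, stdAddChar_intCast_eq_tconst_zpow,
      add_mul (q : ZMod (2 * r)), AddChar.map_add_eq_mul]
    have hphase : tconst r ^ (-(p * q)) / tconst r ^ (2 * (q * p')) * tconst r ^ (-(p' * q')) =
        tconst r ^ (p * q' - p' * q) * tconst r ^ (-((p + p') * (q + q'))) := by
      simp only [← zpow_sub₀ ht, ← zpow_add₀ ht]
      ring_nf
    linear_combination ZMod.stdAddChar ((q : ZMod (2 * r)) * z) *
      ZMod.stdAddChar ((q' : ZMod (2 * r)) * z) * hphase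
  · rw [mul_zero, mul_zero]

variable (r) in
noncomputable def reflMat : Matrix (ZMod (2 * r)) (ZMod (2 * r)) ℂ :=
  (Equiv.neg (ZMod (2 * r))).permMatrix ℂ

lemma reflMat_mul_apply (M : Matrix (ZMod (2 * r)) (ZMod (2 * r)) ℂ) (x y : ZMod (2 * r)) :
    (reflMat r * M) x y = M (-x) y := by
  rw [reflMat, Equiv.Perm.permMatrix, PEquiv.toMatrix_toPEquiv_mul]
  rfl

lemma mul_reflMat_apply (M : Matrix (ZMod (2 * r)) (ZMod (2 * r)) ℂ) (x y : ZMod (2 * r)) :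
    (M * reflMat r) x y = M x (-y) := by
  rw [reflMat, Equiv.Perm.permMatrix, PEquiv.mul_toMatrix_toPEquiv]
  rfl

lemma reflMat_mul_self : reflMat r * reflMat r = 1 := by
  ext x y
  rw [reflMat_mul_apply, ← Matrix.one_mul (reflMat r), mul_reflMat_apply]
  simp only [one_apply, neg_inj]

lemma reflMat_mul_weylMat_mul_reflMat (p q : ℤ) :
    reflMat r * weylMat r p q * reflMat r = weylMat r (-p) (-q) := by
  ext x y
  rw [mul_reflMat_apply, reflMat_mul_apply]
  have hshift : -y = -x + p ↔ y = x + -p := by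
    constructor <;> intro h <;> linear_combination -h
  simp only [weylMat, of_apply, Int.cast_neg, neg_mul, mul_neg, neg_neg, hshift]

variable (r) in
noncomputable def cosMat (p q : ℤ) : Matrix (ZMod (2 * r)) (ZMod (2 * r)) ℂ :=
  weylMat r p q + weylMat r (-p) (-q)

lemma cosMat_neg (p q : ℤ) : cosMat r (-p) (-q) = cosMat r p q := by
  rw [cosMat, cosMat, neg_neg, neg_neg, add_comm]

lemma cosMat_mul_cosMat (p q p' q' : ℤ) :
    cosMat r p q * cosMat r p' q' =
      tconst r ^ (p * q' - p' * q) • cosMat r (p + p') (q + q') +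
        tconst r ^ (p' * q - p * q') • cosMat r (p - p') (q - q') := by
  simp only [cosMat, add_mul, mul_add, weylMat_mul_weylMat, smul_add]
  rw [show -p * -q' - -p' * -q = p * q' - p' * q by ring,
    show p * -q' - -p' * q = p' * q - p * q' by ring,
    show -p * q' - p' * -q = p' * q - p * q' by ring,
    show -p + -p' = -(p + p') by ring, show -q + -q' = -(q + q') by ring,
    ← sub_eq_add_neg, ← sub_eq_add_neg,
    show -p + p' = -(p - p') by ring, show -q + q' = -(q - q') by ring]
  abel

lemma commute_reflMat_cosMat (p q : ℤ) : Commute (reflMat r) (cosMat r p q) := by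
  have h : reflMat r * cosMat r p q * reflMat r = cosMat r p q := by
    rw [cosMat, mul_add, add_mul, reflMat_mul_weylMat_mul_reflMat, reflMat_mul_weylMat_mul_reflMat,
      neg_neg, neg_neg, add_comm]
  calc reflMat r * cosMat r p q
      = reflMat r * cosMat r p q * reflMat r * reflMat r := by
        rw [mul_assoc _ (reflMat r), reflMat_mul_self, mul_one]
    _ = cosMat r p q * reflMat r := by rw [h]

variable (r) in
noncomputable def oddCosMat (p q : ℤ) : Matrix (ZMod (2 * r)) (ZMod (2 * r)) ℂ :=
  (1 - reflMat r) * cosMat r p q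

lemma oddCosMat_apply (p q : ℤ) (x y : ZMod (2 * r)) :
    oddCosMat r p q x y = cosMat r p q x y - cosMat r p q (-x) y := by
  rw [oddCosMat, sub_mul, one_mul, Matrix.sub_apply, reflMat_mul_apply]

lemma oddCosMat_apply_neg_left (p q : ℤ) (x y : ZMod (2 * r)) :
    oddCosMat r p q (-x) y = -oddCosMat r p q x y := by
  rw [← reflMat_mul_apply (oddCosMat r p q), oddCosMat, ← mul_assoc, mul_sub, mul_one,
    reflMat_mul_self, ← neg_sub, neg_mul, neg_apply]

lemma oddCosMat_apply_neg_right (p q : ℤ) (x y : ZMod (2 * r)) :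
    oddCosMat r p q x (-y) = -oddCosMat r p q x y := by
  rw [← mul_reflMat_apply (oddCosMat r p q), oddCosMat, mul_assoc,
    ← (commute_reflMat_cosMat p q).eq, ← mul_assoc, sub_mul, one_mul, reflMat_mul_self, ← neg_sub,
    neg_mul, neg_apply]

lemma oddCosMat_mul_oddCosMat (p q p' q' : ℤ) :
    oddCosMat r p q * oddCosMat r p' q' =
      2 • (tconst r ^ (p * q' - p' * q) • oddCosMat r (p + p') (q + q') +
        tconst r ^ (p' * q - p * q') • oddCosMat r (p - p') (q - q')) := by
  have hsq : (1 - reflMat r) * (1 - reflMat r) = 2 • (1 - reflMat r) := by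
    rw [sub_mul, mul_sub, mul_sub, one_mul, mul_one, one_mul, reflMat_mul_self, two_nsmul]
    abel
  have hc : Commute (1 - reflMat r) (cosMat r p q) :=
    (Commute.one_left _).sub_left (commute_reflMat_cosMat p q)
  calc oddCosMat r p q * oddCosMat r p' q'
      = (1 - reflMat r) * (1 - reflMat r) * (cosMat r p q * cosMat r p' q') := by
        simp only [oddCosMat, mul_assoc, ← mul_assoc (cosMat r p q), ← hc.eq]
    _ = _ := by
        rw [hsq, cosMat_mul_cosMat, smul_mul_assoc, mul_add, mul_smul_comm, mul_smul_comm]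
        rfl

lemma Cmat_eq_submatrix (p q : ℤ) :
    Cmat r p q = (oddCosMat r p q).submatrix (posIdx r) (posIdx r) := by
  ext k m
  set a : ℤ := (k : ℤ) + 1 with ha
  set b : ℤ := (m : ℤ) + 1 with hb
  have hposIdx (i : Fin (r - 1)) : posIdx r i = (((i : ℤ) + 1 : ℤ) : ZMod (2 * r)) := by
    push_cast; rfl
  have ha2 : -(a : ZMod (2 * r)) ≠ a := by
    rw [ha, ← hposIdx]; exact neg_posIdx_ne_posIdx k k
  rw [Cmat, of_apply, eps_eq_ite_sub_ite ha2, eps_eq_ite_sub_ite ha2]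
  simp only [submatrix_apply, oddCosMat_apply, cosMat, Matrix.add_apply, weylMat_apply, hposIdx,
    ← ha, ← hb]
  push_cast
  simp only [neg_mul, ← Int.cast_mul, ← Int.cast_neg, stdAddChar_intCast_eq_tconst_zpow, mul_neg,
    mul_assoc]
  push_cast [sub_neg_eq_add, neg_neg]
  split_ifs <;> ring

lemma Cmat_mul (p q p' q' : ℤ) :
    Cmat r p q * Cmat r p' q' =
      tconst r ^ (p * q' - p' * q) • Cmat r (p + p') (q + q') +
        tconst r ^ (p' * q - p * q') • Cmat r (p - p') (q - q') := by
  have h2 : 2 • (Cmat r p q * Cmat r p' q') = 2 • (tconst r ^ (p * q' - p' * q) •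
      Cmat r (p + p') (q + q') + tconst r ^ (p' * q - p * q') • Cmat r (p - p') (q - q')) := by
    simp only [Cmat_eq_submatrix]
    rw [← submatrix_posIdx_mul _ _ (oddCosMat_apply_neg_right p q) (oddCosMat_apply_neg_left p' q'),
      oddCosMat_mul_oddCosMat]
    rfl
  exact nsmul_right_injective (M := Fin (r - 1) → Fin (r - 1) → ℂ) two_ne_zero h2

lemma Cmat_neg (p q : ℤ) : Cmat r (-p) (-q) = Cmat r p q := by
  simp only [Cmat_eq_submatrix, oddCosMat, cosMat_neg]

lemma Cmat_zero : Cmat r 0 0 = 2 := by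
  ext k m
  simp only [Cmat_eq_submatrix, submatrix_apply, oddCosMat_apply, cosMat, weylMat_zero, neg_zero,
    Matrix.add_apply, one_apply, posIdx_injective.eq_iff, neg_posIdx_ne_posIdx, if_false, add_zero,
    sub_zero, ofNat_apply, Nat.cast_ite, Nat.cast_ofNat, Nat.cast_zero]
  split_ifs <;> norm_num

lemma Cmat_add_one_mul (p q m : ℤ) :
    Cmat r ((m + 1) * p) ((m + 1) * q) =
      Cmat r p q * Cmat r (m * p) (m * q) - Cmat r ((m - 1) * p) ((m - 1) * q) := by
  rw [Cmat_mul, show p * (m * q) - m * p * q = 0 by ring, show m * p * q - p * (m * q) = 0 by ring,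
    zpow_zero, one_smul, one_smul, ← Cmat_neg (p - m * p), show p + m * p = (m + 1) * p by ring,
    show q + m * q = (m + 1) * q by ring, show -(p - m * p) = (m - 1) * p by ring,
    show -(q - m * q) = (m - 1) * q by ring, add_sub_cancel_right]

end

lemma aeval_chebT_of_recurrence {A : Type*} [Ring A] [Algebra ℂ A] (a : A) (u : ℕ → A)
    (h0 : u 0 = 2) (h1 : u 1 = a) (hrec : ∀ n, u (n + 2) = a * u (n + 1) - u n) (n : ℕ) :
    Polynomial.aeval a (chebT n) = u n := by
  induction n using Nat.twoStepInduction with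
  | zero => rw [chebT, map_ofNat, h0]
  | one => rw [chebT, Polynomial.aeval_X, h1]
  | more n ih0 ih1 => rw [chebT, map_sub, map_mul, Polynomial.aeval_X, ih0, ih1, hrec]

/-- `C(np, nq) = T_n(C(p,q))`, where `T_n` is the normalized Chebyshev polynomial of the
first kind. -/
theorem Cmat_mul_chebT (r : ℕ) (hr : 2 ≤ r) (n : ℕ) (p q : ℤ) :
    Cmat r ((n : ℤ) * p) ((n : ℤ) * q) = Polynomial.aeval (Cmat r p q) (chebT n) := by
  have : NeZero r := ⟨by omega⟩
  refine (aeval_chebT_of_recurrence _ (fun n : ℕ => Cmat r (n * p) (n * q)) ?_ ?_ ?_ n).symm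
  · simpa using Cmat_zero
  · simp
  · intro n
    have h := Cmat_add_one_mul (r := r) p q (n + 1)
    push_cast at h ⊢
    convert h using 3 <;> ring
end

section
/- Let r ≥ 2 be an integer. The r−1 diagonal matrices C(0,q), 0 ≤ q ≤ r−2 (the matrix C(0,q) is diagonal with diagonal entries 2cos(qkπ/r), k = 1, …, r−1), form a basis of the complex vector space of diagonal (r−1)×(r−1) matrices. -/
open Complex Matrix

open Polynomial Polynomial.Chebyshev

/-! `C(0,q)` is diagonal with entries `2 cos (q θ_k)`, `θ_k = kπ/r`, and
`2 cos (q θ) = 2 T_q (cos θ)` for the Chebyshev polynomial `T_q` of degree `q`. So the matrix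
`(2 cos (q θ_k))_{k,q}` is a Vandermonde matrix in the distinct nodes `cos θ_k` times a triangular
matrix with nonzero diagonal; being invertible, its columns form a basis of `ℂ^{r-1}`, which
`diagonal` carries onto the diagonal matrices. -/

theorem Matrix.det_eval_matrixOfPolynomials {R : Type*} [CommRing R] {n : ℕ} (v : Fin n → R)
    (p : Fin n → R[X]) (h_deg : ∀ i, (p i).natDegree = i) :
    (of fun i j => (p j).eval (v i)).det = (vandermonde v).det * ∏ i, (p i).leadingCoeff := by
  rw [eval_matrixOfPolynomials_eq_vandermonde_mul_matrixOfPolynomials v p fun i => (h_deg i).le,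
    det_mul, det_of_isUpperTriangular (matrixOfPolynomials_blockTriangular p fun i => (h_deg i).le)]
  congr! with i
  rw [of_apply, Polynomial.leadingCoeff, h_deg]

theorem linearIndependent_eval_of_natDegree_eq {K : Type*} [Field K] {n : ℕ} {v : Fin n → K}
    (hv : Function.Injective v) {p : Fin n → K[X]} (h_deg : ∀ i, (p i).natDegree = i)
    (hp : ∀ i, p i ≠ 0) : LinearIndependent K fun j i => (p j).eval (v i) := by
  refine linearIndependent_cols_iff_isUnit (A := of fun i j => (p j).eval (v i)) |>.mpr ?_
  rw [isUnit_iff_isUnit_det, det_eval_matrixOfPolynomials v p h_deg]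
  exact (mul_ne_zero (det_vandermonde_ne_zero_iff.mpr hv)
    (Finset.prod_ne_zero_iff.mpr fun i _ => leadingCoeff_ne_zero.mpr (hp i))).isUnit

theorem linearIndependent_two_mul_cos {n : ℕ} {θ : Fin n → ℝ} (hθ : Function.Injective θ)
    (hθ_mem : ∀ k, θ k ∈ Set.Icc 0 Real.pi) :
    LinearIndependent ℂ fun (q k : Fin n) => 2 * cos (((q : ℤ) : ℂ) * θ k) := by
  have hv : Function.Injective fun k => cos (θ k : ℂ) := fun k m h => hθ <|
    Real.injOn_cos (hθ_mem k) (hθ_mem m) (by simpa only [← ofReal_cos, ofReal_inj] using h)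
  have h_deg (q : Fin n) : (C 2 * T ℂ q).natDegree = (q : ℕ) := by
    rw [natDegree_C_mul two_ne_zero, natDegree_T]
    rfl
  have hp (q : Fin n) : C 2 * T ℂ q ≠ 0 :=
    mul_ne_zero (C_ne_zero.mpr two_ne_zero)
      (leadingCoeff_ne_zero.mp (by simp [leadingCoeff_T]))
  simpa using linearIndependent_eval_of_natDegree_eq hv h_deg hp

theorem eps_eq_ite {r : ℕ} {k j : ℤ} (hk : 0 < k ∧ k < r) (hj : 0 < j ∧ j < r) :
    eps r k j = if j = k then 1 else 0 := by
  have hsub : 2 * (r : ℤ) ∣ j - k ↔ j = k :=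
    ⟨fun h => sub_eq_zero.mp (Int.eq_zero_of_abs_lt_dvd h (by rw [abs_lt]; omega)),
      fun h => by simp [h]⟩
  have hadd : ¬ 2 * (r : ℤ) ∣ j + k := fun h => by
    have := Int.eq_zero_of_abs_lt_dvd h (by rw [abs_lt]; omega)
    omega
  simp only [eps, hsub, hadd, if_false]

theorem tconst_zpow_two_mul (r : ℕ) (n : ℤ) :
    tconst r ^ (2 * n) = exp (n * (Real.pi / r) * I) := by
  rw [tconst, ← exp_int_mul]
  congr 1
  push_cast
  ring

noncomputable def nodeAngle (r : ℕ) (k : Fin (r - 1)) : ℝ := (k + 1 : ℕ) * Real.pi / r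

theorem nodeAngle_injective (r : ℕ) : Function.Injective (nodeAngle r) := fun k m h => by
  have hr : (r : ℝ) ≠ 0 := Nat.cast_ne_zero.mpr (by have := k.isLt; omega)
  rw [nodeAngle, nodeAngle, div_left_inj' hr, mul_left_inj' Real.pi_ne_zero, Nat.cast_inj] at h
  exact Fin.ext (by omega)

theorem nodeAngle_mem_Icc (r : ℕ) (k : Fin (r - 1)) : nodeAngle r k ∈ Set.Icc 0 Real.pi := by
  have hr : (0 : ℝ) < r := Nat.cast_pos.mpr (by have := k.isLt; omega)
  refine ⟨by unfold nodeAngle; positivity, ?_⟩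
  rw [nodeAngle, div_le_iff₀ hr, mul_comm]
  gcongr
  exact_mod_cast (by omega : (k : ℕ) + 1 ≤ r)

theorem Cmat_zero_eq_diagonal (r : ℕ) (q : ℤ) :
    Cmat r 0 q = diagonal fun k => 2 * cos (q * nodeAngle r k) := by
  ext k m
  have hkm : ((m : ℤ) + 1 = (k : ℤ) + 1) ↔ k = m := by omega
  rw [Cmat, of_apply, diagonal_apply, sub_zero, add_zero, eps_eq_ite (by omega) (by omega),
    zero_mul, neg_zero, zpow_zero, one_mul]
  simp only [hkm]
  split_ifs with h
  · rw [h, Int.cast_one, mul_one, mul_one, two_cos, ← mul_neg, mul_assoc 2 q, mul_assoc 2 q,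
      tconst_zpow_two_mul, tconst_zpow_two_mul, nodeAngle]
    congr 1 <;> congr 1 <;> push_cast <;> ring
  · simp

theorem Cmat_zero_q_basis_of_diagonal_general (r : ℕ) :
    LinearIndependent ℂ (fun q : Fin (r - 1) => Cmat r 0 (q : ℤ)) ∧
      ∀ A : Matrix (Fin (r - 1)) (Fin (r - 1)) ℂ,
        A.IsDiag ↔ A ∈ Submodule.span ℂ (Set.range fun q : Fin (r - 1) => Cmat r 0 (q : ℤ)) := by
  have hd := linearIndependent_two_mul_cos (nodeAngle_injective r) (nodeAngle_mem_Icc r)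
  have hC : (fun q : Fin (r - 1) => Cmat r 0 (q : ℤ)) =
      diagonalLinearMap (Fin (r - 1)) ℂ ℂ ∘
        fun (q : Fin (r - 1)) k => 2 * cos (((q : ℤ) : ℂ) * nodeAngle r k) :=
    funext fun q => Cmat_zero_eq_diagonal r q
  rw [hC]
  refine ⟨hd.map' _ (LinearMap.ker_eq_bot.mpr diagonal_injective), fun A => ?_⟩
  rw [Set.range_comp, ← Submodule.map_span, hd.span_eq_top_of_card_eq_finrank' (by simp),
    Submodule.map_top, LinearMap.mem_range, isDiag_iff_diagonal_diag]
  exact ⟨fun h => ⟨A.diag, h⟩, by rintro ⟨d, rfl⟩; exact congrArg diagonal (diag_diagonal d)⟩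

/-- The `r−1` diagonal matrices `C(0,q)`, `0 ≤ q ≤ r−2`, form a basis of the space of
diagonal `(r−1)×(r−1)` complex matrices: they are linearly independent and a matrix is
diagonal if and only if it lies in their span. -/
theorem Cmat_zero_q_basis_of_diagonal (r : ℕ) (hr : 2 ≤ r) :
    LinearIndependent ℂ (fun q : Fin (r - 1) => Cmat r 0 (q : ℤ)) ∧
      ∀ A : Matrix (Fin (r - 1)) (Fin (r - 1)) ℂ,
        A.IsDiag ↔ A ∈ Submodule.span ℂ (Set.range fun q : Fin (r - 1) => Cmat r 0 (q : ℤ)) :=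
  Cmat_zero_q_basis_of_diagonal_general r
end
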